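/- arXiv:1112.4617 — 3 statements merged into one kernel-verified Lean document; each statement's English description precedes it below -/
import Mathlib

section
/- Let d ≥ 3 and let R : [0,∞) → ℝ solve the ODE R'(τ) = (1/d)(R(τ)^{-d} - 1)R(τ) with initial data R(0) = R₀ > 0. Then R(τ) → 1 as τ → ∞, and there exists a constant C (depending on R₀ and d) such that |R(τ) - 1| ≤ C e^{-τ} for all τ ≥ 0. -/
open Real Filter

/-!
Multiplying the ODE by `d R^{d-1}` linearises it: `(R^d - 1)' = -(R^d - 1)`, so
`R(τ)^d - 1 = (R₀^d - 1) e^{-τ}`. Since `|x - 1| ≤ |x^d - 1|` for `x ≥ 0`, this gives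
`|R(τ) - 1| ≤ |R₀^d - 1| e^{-τ}`.
-/

lemma abs_sub_one_le_abs_pow_sub_one {α : Type*} [Ring α] [LinearOrder α] [IsStrictOrderedRing α]
    {x : α} (hx : 0 ≤ x) {n : ℕ} (hn : n ≠ 0) : |x - 1| ≤ |x ^ n - 1| := by
  rcases le_total x 1 with hx1 | hx1
  · rw [abs_of_nonpos (sub_nonpos.2 hx1), abs_of_nonpos (sub_nonpos.2 (pow_le_one₀ hx hx1))]
    exact neg_le_neg (sub_le_sub_right (pow_le_of_le_one hx hx1 hn) 1)
  · rw [abs_of_nonneg (sub_nonneg.2 hx1), abs_of_nonneg (sub_nonneg.2 (one_le_pow₀ hx1))]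
    exact sub_le_sub_right (le_self_pow₀ hx1 hn) 1

lemma eq_of_hasDerivAt_zero_of_le {E : Type*} [NormedAddCommGroup E] [NormedSpace ℝ E]
    {f : ℝ → E} {a : ℝ} (hf : ∀ x, a ≤ x → HasDerivAt f 0 x) {x : ℝ} (hx : a ≤ x) :
    f x = f a :=
  constant_of_has_deriv_right_zero
    (fun y hy => (hf y hy.1).continuousAt.continuousWithinAt)
    (fun y hy => (hf y hy.1).hasDerivWithinAt) x ⟨hx, le_rfl⟩

lemma hasDerivAt_exp_mul_pow_sub_one {R : ℝ → ℝ} {d : ℕ} {τ : ℝ} (hd : d ≠ 0) (hR : R τ ≠ 0)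
    (hode : HasDerivAt R ((1 / d) * (R τ ^ (-(d : ℤ)) - 1) * R τ) τ) :
    HasDerivAt (fun t => exp t * (R t ^ d - 1)) 0 τ := by
  refine ((hasDerivAt_exp τ).mul ((hode.pow d).sub_const 1)).congr_deriv ?_
  obtain ⟨k, rfl⟩ := Nat.exists_eq_add_one_of_ne_zero hd
  rw [zpow_neg, zpow_natCast, Pi.pow_apply, Nat.add_sub_cancel]
  field_simp
  ring

lemma pow_sub_one_eq_mul_exp_neg {R : ℝ → ℝ} {d : ℕ} (hd : d ≠ 0)
    (hpos : ∀ τ : ℝ, 0 ≤ τ → 0 < R τ)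
    (hode : ∀ τ : ℝ, 0 ≤ τ → HasDerivAt R ((1 / d) * (R τ ^ (-(d : ℤ)) - 1) * R τ) τ)
    {τ : ℝ} (hτ : 0 ≤ τ) : R τ ^ d - 1 = (R 0 ^ d - 1) * exp (-τ) := by
  have h := eq_of_hasDerivAt_zero_of_le
    (fun t ht => hasDerivAt_exp_mul_pow_sub_one hd (hpos t ht).ne' (hode t ht)) hτ
  simp only [exp_zero, one_mul] at h
  rw [← h, mul_comm, ← mul_assoc, ← exp_add, neg_add_cancel, exp_zero, one_mul]

theorem stmt0_general (d : ℕ) (hd : 3 ≤ d) (R : ℝ → ℝ)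
    (hpos : ∀ τ : ℝ, 0 ≤ τ → 0 < R τ)
    (hode : ∀ τ : ℝ, 0 ≤ τ →
      HasDerivAt R ((1 / d) * ((R τ) ^ (-(d : ℤ)) - 1) * R τ) τ) :
    Tendsto R atTop (nhds 1) ∧
      ∃ C : ℝ, ∀ τ : ℝ, 0 ≤ τ → |R τ - 1| ≤ C * Real.exp (-τ) := by
  have hd0 : d ≠ 0 := by omega
  have hbound : ∀ τ : ℝ, 0 ≤ τ → |R τ - 1| ≤ |R 0 ^ d - 1| * exp (-τ) := fun τ hτ =>
    calc |R τ - 1| ≤ |R τ ^ d - 1| := abs_sub_one_le_abs_pow_sub_one (hpos τ hτ).le hd0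
      _ = |R 0 ^ d - 1| * exp (-τ) := by
        rw [pow_sub_one_eq_mul_exp_neg hd0 hpos hode hτ, abs_mul, abs_of_pos (exp_pos _)]
  refine ⟨?_, _, hbound⟩
  have hdecay : Tendsto (fun τ => |R 0 ^ d - 1| * exp (-τ)) atTop (nhds 0) := by
    simpa using tendsto_exp_neg_atTop_nhds_zero.const_mul |R 0 ^ d - 1|
  refine tendsto_sub_nhds_zero_iff.1 (squeeze_zero_norm' ?_ hdecay)
  filter_upwards [eventually_ge_atTop 0] with τ hτ
  exact hbound τ hτ

/-- If `d ≥ 3` and `R` is a positive solution on `[0,∞)` of the ODE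
`R'(τ) = (1/d)(R(τ)^{-d} - 1) R(τ)` with `R(0) = R₀ > 0`, then `R(τ) → 1` as `τ → ∞`
and `|R(τ) - 1| ≤ C e^{-τ}` for some constant `C` and all `τ ≥ 0`. -/
theorem stmt0 (d : ℕ) (hd : 3 ≤ d) (R : ℝ → ℝ) (R₀ : ℝ) (hR₀ : 0 < R₀)
    (hinit : R 0 = R₀)
    (hpos : ∀ τ : ℝ, 0 ≤ τ → 0 < R τ)
    (hode : ∀ τ : ℝ, 0 ≤ τ →
      HasDerivAt R ((1 / d) * ((R τ) ^ (-(d : ℤ)) - 1) * R τ) τ) :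
    Tendsto R atTop (nhds 1) ∧
      ∃ C : ℝ, ∀ τ : ℝ, 0 ≤ τ → |R τ - 1| ≤ C * Real.exp (-τ) :=
  stmt0_general d hd R hpos hode
end

section
/- Let d ≥ 3 and let R solve R'(τ) = (1/d)(R^{-d} - 1)R with R(0) = R₀ > 0. Then the function R̃(τ) = min{(1/2)τ^{1/(d+1)}, 1/2} satisfies R̃(τ) ≤ R(τ) for all τ ≥ 1; in particular R(τ) ≥ 1/2 and hence R(τ)^{-d} ≤ 2^d for all τ ≥ 1. -/
/-!
The substitution `u = R ^ d` turns the Bernoulli equation `R' = (1/d)(R^{-d} - 1)R` into the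
linear equation `u' = 1 - u`, so `u τ = 1 + (u 0 - 1) e^{-τ} ≥ 1 - e^{-τ}`. For `τ ≥ 1` this is
at least `1/2` because `e ≥ 2`, and `R τ ^ d ≥ 1/2` forces `R τ ≥ 1/2 ≥ R̃ τ`.
-/

open Real

theorem HasDerivAt.pow_of_bernoulli {R : ℝ → ℝ} {d : ℕ} {τ : ℝ} (hd : d ≠ 0) (hR : R τ ≠ 0)
    (h : HasDerivAt R ((1 / d) * (R τ ^ (-(d : ℤ)) - 1) * R τ) τ) :
    HasDerivAt (fun t => R t ^ d) (1 - R τ ^ d) τ := by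
  refine (h.pow d).congr_deriv ?_
  obtain ⟨k, rfl⟩ := Nat.exists_eq_succ_of_ne_zero hd
  rw [zpow_neg, zpow_natCast, Nat.succ_sub_one, pow_succ]
  field_simp

theorem eq_one_add_mul_exp_neg_of_hasDerivAt {u : ℝ → ℝ}
    (hu : ∀ t, 0 ≤ t → HasDerivAt u (1 - u t) t) {τ : ℝ} (hτ : 0 ≤ τ) :
    u τ = 1 + (u 0 - 1) * exp (-τ) := by
  set g : ℝ → ℝ := fun t => (u t - 1) * exp t
  have hg : ∀ t, 0 ≤ t → HasDerivAt g 0 t := fun t ht => by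
    refine (((hu t ht).sub_const 1).mul (hasDerivAt_exp t)).congr_deriv ?_
    ring
  have hconst : g τ = g 0 :=
    constant_of_has_deriv_right_zero (fun t ht => (hg t ht.1).continuousAt.continuousWithinAt)
      (fun t ht => (hg t ht.1).hasDerivWithinAt) τ ⟨hτ, le_rfl⟩
  simp only [g, exp_zero, mul_one] at hconst
  rw [← hconst, mul_assoc, ← exp_add, add_neg_cancel, exp_zero]
  ring

theorem le_of_le_pow {α : Type*} [Semiring α] [LinearOrder α] [IsStrictOrderedRing α]
    {a x : α} {d : ℕ} (hx : 0 ≤ x) (ha : a ≤ 1) (hd : d ≠ 0)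
    (h : a ≤ x ^ d) : a ≤ x := by
  rcases le_or_gt x 1 with hx1 | hx1
  · exact h.trans (pow_le_of_le_one hx hx1 hd)
  · exact ha.trans hx1.le

theorem exp_neg_le_one_half {τ : ℝ} (hτ : 1 ≤ τ) : exp (-τ) ≤ 1 / 2 := by
  have h2 : 2 ≤ exp τ := by linarith [add_one_le_exp τ]
  rw [exp_neg]
  exact inv_anti₀ two_pos h2 |>.trans_eq (one_div 2).symm

theorem stmt1_general (d : ℕ) (hd : 3 ≤ d) (R : ℝ → ℝ)
    (hpos : ∀ τ : ℝ, 0 ≤ τ → 0 < R τ)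
    (hode : ∀ τ : ℝ, 0 ≤ τ →
      HasDerivAt R ((1 / d) * ((R τ) ^ (-(d : ℤ)) - 1) * R τ) τ) :
    ∀ τ : ℝ, 1 ≤ τ →
      min ((1 / 2) * τ ^ ((1 : ℝ) / (d + 1))) (1 / 2) ≤ R τ ∧
      (1 / 2 : ℝ) ≤ R τ ∧ (R τ) ^ (-(d : ℤ)) ≤ 2 ^ d := by
  have hd0 : d ≠ 0 := by omega
  have hu : ∀ t, 0 ≤ t → HasDerivAt (fun t => R t ^ d) (1 - R t ^ d) t :=
    fun t ht => (hode t ht).pow_of_bernoulli hd0 (hpos t ht).ne'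
  intro τ hτ
  have hτ0 : 0 ≤ τ := by linarith
  have hpow : 1 / 2 ≤ R τ ^ d := by
    rw [eq_one_add_mul_exp_neg_of_hasDerivAt hu hτ0]
    nlinarith [pow_pos (hpos 0 le_rfl) d, exp_pos (-τ), exp_neg_le_one_half hτ]
  have hhalf : 1 / 2 ≤ R τ := le_of_le_pow (hpos τ hτ0).le (by norm_num) hd0 hpow
  refine ⟨(min_le_right _ _).trans hhalf, hhalf, ?_⟩
  have hinv : (R τ)⁻¹ ≤ 2 := inv_le_of_inv_le₀ (by norm_num) (by simpa using hhalf)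
  rw [zpow_neg, zpow_natCast, ← inv_pow]
  exact pow_le_pow_left₀ (inv_nonneg.2 (hpos τ hτ0).le) hinv d

/-- If `d ≥ 3` and `R` solves `R' = (1/d)(R^{-d} - 1)R` with `R(0) = R₀ > 0`,
then `R̃(τ) = min((1/2)τ^{1/(d+1)}, 1/2)` is a lower bound for `R` on `[1,∞)`; in particular
`R(τ) ≥ 1/2` and `R(τ)^{-d} ≤ 2^d` for all `τ ≥ 1`. -/
theorem stmt1 (d : ℕ) (hd : 3 ≤ d) (R : ℝ → ℝ) (R₀ : ℝ) (hR₀ : 0 < R₀)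
    (hinit : R 0 = R₀)
    (hpos : ∀ τ : ℝ, 0 ≤ τ → 0 < R τ)
    (hode : ∀ τ : ℝ, 0 ≤ τ →
      HasDerivAt R ((1 / d) * ((R τ) ^ (-(d : ℤ)) - 1) * R τ) τ) :
    ∀ τ : ℝ, 1 ≤ τ →
      min ((1 / 2) * τ ^ ((1 : ℝ) / (d + 1))) (1 / 2) ≤ R τ ∧
      (1 / 2 : ℝ) ≤ R τ ∧ (R τ) ^ (-(d : ℤ)) ≤ 2 ^ d :=
  stmt1_general d hd R hpos hode
end

section
/- Let d ≥ 3, q ∈ (2-d, 2], and C₁ > 0. Let R : [0,∞) → ℝ solve R'(t) = C₁(1 - R(t)^{d+q-2}) R(t)^{-d+1} with R(0) = R₀ > 1. Then R(t) is decreasing, stays in (1, R₀], and there is a constant C' > 0 such that |R(t) - 1| ≤ C' e^{-C₁(d+q-2) t} for all t ≥ 0. -/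
open Real Set

/-!
With `α = d + q - 2 > 0`, `h = R ^ α - 1` solves the linear equation `h' = -C₁ α R ^ (q - 2) h`,
so `h e^F` is monotone as soon as `(F' - C₁ α R ^ (q - 2)) h` has a constant sign. For
`F = C₁ α t` that sign is `+`, because `(1 - R ^ (q - 2)) h ≥ 0` whatever the sign of `R - 1`;
hence `h > 0`, i.e. `R > 1`, and `R` decreases. Then `R ^ (q - 2) ≥ R₀ ^ (q - 2)` gives decay of `h`
at the slower rate `C₁ α R₀ ^ (q - 2)`, and since `α (1 - R ^ (q - 2)) ≤ (2 - q) h`, the defect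
from the sharp rate `C₁ α` is integrable and costs only a bounded factor. Finally
`α (R - 1) ≤ R h`.
-/

namespace Real

theorem mul_log_le_rpow_sub_one {x : ℝ} (hx : 0 < x) (α : ℝ) : α * log x ≤ x ^ α - 1 := by
  rw [← log_rpow hx]
  exact log_le_sub_one_of_pos (rpow_pos_of_pos hx α)

theorem mul_one_sub_rpow_le {x α β : ℝ} (hx : 0 < x) (hα : 0 ≤ α) (hβ : β ≤ 0) :
    α * (1 - x ^ β) ≤ -β * (x ^ α - 1) := by
  have hexp : 1 - x ^ β ≤ -β * log x := by
    have := add_one_le_exp (log x * β)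
    rw [← rpow_def_of_pos hx] at this
    linarith
  calc α * (1 - x ^ β) ≤ α * (-β * log x) := mul_le_mul_of_nonneg_left hexp hα
    _ = -β * (α * log x) := by ring
    _ ≤ -β * (x ^ α - 1) :=
      mul_le_mul_of_nonneg_left (mul_log_le_rpow_sub_one hx α) (neg_nonneg.2 hβ)

theorem mul_sub_one_le_mul_rpow_sub_one {x α : ℝ} (hx : 0 < x) (hα : 0 ≤ α) :
    α * (x - 1) ≤ x * (x ^ α - 1) := by
  have hlog : x - 1 ≤ x * log x :=
    calc x - 1 = x * (1 - x⁻¹) := by field_simp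
      _ ≤ x * log x := mul_le_mul_of_nonneg_left (one_sub_inv_le_log_of_pos hx) hx.le
  calc α * (x - 1) ≤ α * (x * log x) := mul_le_mul_of_nonneg_left hlog hα
    _ = x * (α * log x) := by ring
    _ ≤ x * (x ^ α - 1) := mul_le_mul_of_nonneg_left (mul_log_le_rpow_sub_one hx α) hx.le

theorem one_sub_rpow_mul_rpow_sub_one_nonneg {x α β : ℝ} (hx : 0 < x) (hα : 0 ≤ α)
    (hβ : β ≤ 0) : 0 ≤ (1 - x ^ β) * (x ^ α - 1) := by
  rcases le_total 1 x with h | h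
  · exact mul_nonneg (sub_nonneg.2 (rpow_le_one_of_one_le_of_nonpos h hβ))
      (sub_nonneg.2 (one_le_rpow h hα))
  · exact mul_nonneg_of_nonpos_of_nonpos
      (sub_nonpos.2 (one_le_rpow_of_pos_of_le_one_of_nonpos hx h hβ))
      (sub_nonpos.2 (rpow_le_one hx.le h hα))

end Real

theorem monotoneOn_Ici_of_hasDerivAt_nonneg {f f' : ℝ → ℝ} {a : ℝ}
    (hf : ∀ t, a ≤ t → HasDerivAt f (f' t) t) (hf' : ∀ t, a < t → 0 ≤ f' t) :
    MonotoneOn f (Ici a) := by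
  refine monotoneOn_of_hasDerivWithinAt_nonneg (f' := f') (convex_Ici a)
    (fun t ht => (hf t ht).continuousAt.continuousWithinAt) (fun t ht => ?_) (fun t ht => ?_)
  · rw [interior_Ici] at ht
    exact (hf t (le_of_lt ht)).hasDerivWithinAt
  · rw [interior_Ici] at ht
    exact hf' t ht

theorem strictAntiOn_Ici_of_hasDerivAt_neg {f f' : ℝ → ℝ} {a : ℝ}
    (hf : ∀ t, a ≤ t → HasDerivAt f (f' t) t) (hf' : ∀ t, a < t → f' t < 0) :
    StrictAntiOn f (Ici a) := by
  refine strictAntiOn_of_hasDerivWithinAt_neg (f' := f') (convex_Ici a)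
    (fun t ht => (hf t ht).continuousAt.continuousWithinAt) (fun t ht => ?_) (fun t ht => ?_)
  · rw [interior_Ici] at ht
    exact (hf t (le_of_lt ht)).hasDerivWithinAt
  · rw [interior_Ici] at ht
    exact hf' t ht

section ExpWeight

variable {h k F φ : ℝ → ℝ}

theorem monotoneOn_mul_exp_of_hasDerivAt (hh : ∀ t, 0 ≤ t → HasDerivAt h (-k t * h t) t)
    (hF : ∀ t, 0 ≤ t → HasDerivAt F (φ t) t) (hsign : ∀ t, 0 < t → 0 ≤ (φ t - k t) * h t) :
    MonotoneOn (fun t => h t * exp (F t)) (Ici 0) :=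
  monotoneOn_Ici_of_hasDerivAt_nonneg
    (fun t ht => ((hh t ht).mul (hF t ht).exp).congr_deriv (by ring))
    (fun t ht => mul_nonneg (hsign t ht) (exp_pos _).le)

theorem antitoneOn_mul_exp_of_hasDerivAt (hh : ∀ t, 0 ≤ t → HasDerivAt h (-k t * h t) t)
    (hF : ∀ t, 0 ≤ t → HasDerivAt F (φ t) t) (hsign : ∀ t, 0 < t → (φ t - k t) * h t ≤ 0) :
    AntitoneOn (fun t => h t * exp (F t)) (Ici 0) := by
  have hneg := monotoneOn_mul_exp_of_hasDerivAt (h := fun t => -h t)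
    (fun t ht => (hh t ht).neg.congr_deriv (by ring)) hF
    (fun t ht => by nlinarith [hsign t ht])
  intro a ha b hb hab
  simpa using hneg ha hb hab

end ExpWeight

theorem hasDerivAt_rpow_sub_one_of_hasDerivAt {R : ℝ → ℝ} {C α γ t : ℝ} (hRt : 0 < R t)
    (hR : HasDerivAt R (C * (1 - R t ^ α) * R t ^ γ) t) :
    HasDerivAt (fun s => R s ^ α - 1) (-(C * α * R t ^ (γ + α - 1)) * (R t ^ α - 1)) t := by
  refine ((hR.rpow_const (Or.inl hRt.ne')).sub_const 1).congr_deriv ?_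
  rw [rpow_sub hRt, rpow_sub hRt, rpow_add hRt, rpow_one]
  field_simp
  ring

section RpowSubOne

variable {R : ℝ → ℝ} {C α β : ℝ}

theorem one_lt_of_hasDerivAt_rpow_sub_one (hC : 0 ≤ C) (hα : 0 < α) (hβ : β ≤ 0)
    (hR : ∀ t, 0 ≤ t → 0 < R t)
    (hode : ∀ t, 0 ≤ t →
      HasDerivAt (fun s => R s ^ α - 1) (-(C * α * R t ^ β) * (R t ^ α - 1)) t)
    (hR0 : 1 < R 0) {t : ℝ} (ht : 0 ≤ t) : 1 < R t := by
  have hmono := monotoneOn_mul_exp_of_hasDerivAt (F := fun s => C * α * s) (φ := fun _ => C * α)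
    hode (fun t _ => (hasDerivAt_id' t).const_mul (C * α) |>.congr_deriv (mul_one _))
    (fun t ht => by
      rw [show (C * α - C * α * R t ^ β) * (R t ^ α - 1)
          = C * α * ((1 - R t ^ β) * (R t ^ α - 1)) by ring]
      exact mul_nonneg (mul_nonneg hC hα.le)
        (Real.one_sub_rpow_mul_rpow_sub_one_nonneg (hR t ht.le) hα.le hβ))
  have hweighted := hmono self_mem_Ici ht ht
  simp only [mul_zero, exp_zero, mul_one] at hweighted
  have hpos : 0 < (R t ^ α - 1) * exp (C * α * t) :=
    lt_of_lt_of_le (sub_pos.2 (one_lt_rpow hR0 hα)) hweighted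
  have hRα : 1 < R t ^ α := sub_pos.1 (pos_of_mul_pos_left hpos (exp_pos _).le)
  exact ((one_lt_rpow_iff_of_pos (hR t ht)).1 hRα).resolve_right (fun h => hα.not_gt h.2) |>.1

theorem rpow_sub_one_le_mul_exp_initialRate (hC : 0 ≤ C) (hα : 0 ≤ α) (hβ : β ≤ 0)
    (hode : ∀ t, 0 ≤ t →
      HasDerivAt (fun s => R s ^ α - 1) (-(C * α * R t ^ β) * (R t ^ α - 1)) t)
    (hR1 : ∀ t, 0 ≤ t → 1 ≤ R t) (hle : ∀ t, 0 ≤ t → R t ≤ R 0) {t : ℝ} (ht : 0 ≤ t) :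
    R t ^ α - 1 ≤ (R 0 ^ α - 1) * exp (-(C * α * R 0 ^ β) * t) := by
  set c₀ := C * α * R 0 ^ β
  have hanti := antitoneOn_mul_exp_of_hasDerivAt (F := fun s => c₀ * s) (φ := fun _ => c₀)
    hode (fun t _ => (hasDerivAt_id' t).const_mul c₀ |>.congr_deriv (mul_one _))
    (fun t ht => by
      have hrate : c₀ ≤ C * α * R t ^ β := mul_le_mul_of_nonneg_left
        (rpow_le_rpow_of_nonpos (by linarith [hR1 t ht.le]) (hle t ht.le) hβ) (mul_nonneg hC hα)
      exact mul_nonpos_of_nonpos_of_nonneg (by linarith)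
        (sub_nonneg.2 (one_le_rpow (hR1 t ht.le) hα)))
  have hweighted := hanti self_mem_Ici ht ht
  simp only [mul_zero, exp_zero, mul_one] at hweighted
  calc R t ^ α - 1 = (R t ^ α - 1) * exp (c₀ * t) * exp (-c₀ * t) := by
        rw [mul_assoc, ← exp_add, show c₀ * t + -c₀ * t = 0 by ring, exp_zero, mul_one]
    _ ≤ (R 0 ^ α - 1) * exp (-c₀ * t) := by gcongr

theorem rpow_sub_one_le_mul_exp_sharpRate (hC : 0 < C) (hα : 0 < α) (hβ : β ≤ 0)
    (hode : ∀ t, 0 ≤ t →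
      HasDerivAt (fun s => R s ^ α - 1) (-(C * α * R t ^ β) * (R t ^ α - 1)) t)
    (hR1 : ∀ t, 0 ≤ t → 1 ≤ R t) (hle : ∀ t, 0 ≤ t → R t ≤ R 0) {t : ℝ} (ht : 0 ≤ t) :
    R t ^ α - 1 ≤
      (R 0 ^ α - 1) * exp (-β * (R 0 ^ α - 1) / (α * R 0 ^ β)) * exp (-(C * α) * t) := by
  set h₀ := R 0 ^ α - 1
  set c₀ := C * α * R 0 ^ β
  set K := -β * h₀ / (α * R 0 ^ β)
  have hR0β : 0 < R 0 ^ β := rpow_pos_of_pos (by linarith [hR1 0 le_rfl]) β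
  have hh₀ : 0 ≤ h₀ := sub_nonneg.2 (one_le_rpow (hR1 0 le_rfl) hα.le)
  have hK : 0 ≤ K := div_nonneg (mul_nonneg (neg_nonneg.2 hβ) hh₀) (by positivity)
  have hKc₀ : K * c₀ = C * (-β) * h₀ := by
    simp only [K, c₀]
    field_simp
  have hF : ∀ t, 0 ≤ t → HasDerivAt (fun s => C * α * s + K * exp (-c₀ * s))
      (C * α - K * c₀ * exp (-c₀ * t)) t := fun t _ =>
    ((hasDerivAt_id' t).const_mul (C * α) |>.add
      ((((hasDerivAt_id' t).const_mul (-c₀)).exp).const_mul K)).congr_deriv (by ring)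
  have hanti := antitoneOn_mul_exp_of_hasDerivAt hode hF (fun t ht => by
    have hRt : 0 < R t := by linarith [hR1 t ht.le]
    have hdefect : C * α * (1 - R t ^ β) ≤ K * c₀ * exp (-c₀ * t) := by
      rw [hKc₀]
      calc C * α * (1 - R t ^ β) = C * (α * (1 - R t ^ β)) := by ring
        _ ≤ C * (-β * (R t ^ α - 1)) :=
          mul_le_mul_of_nonneg_left (Real.mul_one_sub_rpow_le hRt hα.le hβ) hC.le
        _ ≤ C * (-β * (h₀ * exp (-c₀ * t))) := by
          gcongr
          · exact neg_nonneg.2 hβ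
          · exact rpow_sub_one_le_mul_exp_initialRate hC.le hα.le hβ hode hR1 hle ht.le
        _ = C * (-β) * h₀ * exp (-c₀ * t) := by ring
    exact mul_nonpos_of_nonpos_of_nonneg (by linarith)
      (sub_nonneg.2 (one_le_rpow (hR1 t ht.le) hα.le)))
  have hweighted := hanti self_mem_Ici ht ht
  simp only [mul_zero, zero_add, exp_zero, mul_one] at hweighted
  have hht : 0 ≤ R t ^ α - 1 := sub_nonneg.2 (one_le_rpow (hR1 t ht) hα.le)
  calc R t ^ α - 1 = (R t ^ α - 1) * exp (C * α * t) * exp (-(C * α) * t) := by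
        rw [mul_assoc, ← exp_add, show C * α * t + -(C * α) * t = 0 by ring, exp_zero, mul_one]
    _ ≤ (R t ^ α - 1) * exp (C * α * t + K * exp (-c₀ * t)) * exp (-(C * α) * t) := by
        gcongr
        exact le_add_of_nonneg_right (by positivity)
    _ ≤ h₀ * exp K * exp (-(C * α) * t) := by gcongr

end RpowSubOne

theorem stmt2_general (d : ℕ) (q : ℝ) (hq1 : 2 - (d : ℝ) < q) (hq2 : q ≤ 2)
    (C₁ : ℝ) (hC₁ : 0 < C₁) (R : ℝ → ℝ) (R₀ : ℝ) (hR₀ : 1 < R₀) (hinit : R 0 = R₀)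
    (hpos : ∀ t : ℝ, 0 ≤ t → 0 < R t)
    (hode : ∀ t : ℝ, 0 ≤ t →
      HasDerivAt R (C₁ * (1 - (R t) ^ ((d : ℝ) + q - 2)) * (R t) ^ ((1 : ℝ) - d)) t) :
    StrictAntiOn R (Ici 0) ∧ (∀ t : ℝ, 0 ≤ t → R t ∈ Ioc 1 R₀) ∧
      ∃ C' : ℝ, 0 < C' ∧ ∀ t : ℝ, 0 ≤ t →
        |R t - 1| ≤ C' * Real.exp (-(C₁ * ((d : ℝ) + q - 2)) * t) := by
  set α : ℝ := (d : ℝ) + q - 2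
  have hα : 0 < α := by linarith
  have hβ : q - 2 ≤ 0 := by linarith
  have hh : ∀ t, 0 ≤ t → HasDerivAt (fun s => R s ^ α - 1)
      (-(C₁ * α * R t ^ (q - 2)) * (R t ^ α - 1)) t := fun t ht => by
    simpa only [show (1 : ℝ) - d + α - 1 = q - 2 by ring] using
      hasDerivAt_rpow_sub_one_of_hasDerivAt (hpos t ht) (hode t ht)
  have hR1 : ∀ t, 0 ≤ t → 1 < R t := fun t ht =>
    one_lt_of_hasDerivAt_rpow_sub_one hC₁.le hα hβ hpos hh (hinit ▸ hR₀) ht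
  have hanti : StrictAntiOn R (Ici 0) := strictAntiOn_Ici_of_hasDerivAt_neg hode fun t ht =>
    mul_neg_of_neg_of_pos (mul_neg_of_pos_of_neg hC₁ (sub_neg.2 (one_lt_rpow (hR1 t ht.le) hα)))
      (rpow_pos_of_pos (hpos t ht.le) _)
  have hle : ∀ t, 0 ≤ t → R t ≤ R₀ := fun t ht => hinit ▸ hanti.antitoneOn self_mem_Ici ht ht
  refine ⟨hanti, fun t ht => ⟨hR1 t ht, hle t ht⟩, ?_⟩
  set K := -(q - 2) * (R₀ ^ α - 1) / (α * R₀ ^ (q - 2))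
  refine ⟨R₀ / α * ((R₀ ^ α - 1) * exp K), ?_, fun t ht => ?_⟩
  · have := sub_pos.2 (one_lt_rpow hR₀ hα)
    positivity
  have hdecay := rpow_sub_one_le_mul_exp_sharpRate hC₁ hα hβ hh (fun t ht => (hR1 t ht).le)
    (fun t ht => hinit ▸ hle t ht) ht
  rw [hinit] at hdecay
  rw [abs_of_pos (sub_pos.2 (hR1 t ht))]
  calc R t - 1 ≤ R t / α * (R t ^ α - 1) := by
        rw [div_mul_eq_mul_div, le_div_iff₀ hα, mul_comm]
        exact Real.mul_sub_one_le_mul_rpow_sub_one (hpos t ht) hα.le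
    _ ≤ R₀ / α * ((R₀ ^ α - 1) * exp K * exp (-(C₁ * α) * t)) := by
        gcongr
        · exact sub_nonneg.2 (one_le_rpow (hR1 t ht).le hα.le)
        · exact hle t ht
    _ = R₀ / α * ((R₀ ^ α - 1) * exp K) * exp (-(C₁ * α) * t) := by ring

/-- Let `d ≥ 3`, `q ∈ (2-d, 2]`, `C₁ > 0`, and let `R` solve
`R'(t) = C₁ (1 - R(t)^{d+q-2}) R(t)^{1-d}` with `R(0) = R₀ > 1`. Then `R` is (strictly)
decreasing on `[0,∞)`, stays in `(1, R₀]`, and `|R(t) - 1| ≤ C' e^{-C₁(d+q-2)t}` for some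
`C' > 0` and all `t ≥ 0`. -/
theorem stmt2 (d : ℕ) (hd : 3 ≤ d) (q : ℝ) (hq1 : 2 - (d : ℝ) < q) (hq2 : q ≤ 2)
    (C₁ : ℝ) (hC₁ : 0 < C₁) (R : ℝ → ℝ) (R₀ : ℝ) (hR₀ : 1 < R₀) (hinit : R 0 = R₀)
    (hpos : ∀ t : ℝ, 0 ≤ t → 0 < R t)
    (hode : ∀ t : ℝ, 0 ≤ t →
      HasDerivAt R (C₁ * (1 - (R t) ^ ((d : ℝ) + q - 2)) * (R t) ^ ((1 : ℝ) - d)) t) :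
    StrictAntiOn R (Ici 0) ∧ (∀ t : ℝ, 0 ≤ t → R t ∈ Ioc 1 R₀) ∧
      ∃ C' : ℝ, 0 < C' ∧ ∀ t : ℝ, 0 ≤ t →
        |R t - 1| ≤ C' * Real.exp (-(C₁ * ((d : ℝ) + q - 2)) * t) :=
  stmt2_general d q hq1 hq2 C₁ hC₁ R R₀ hR₀ hinit hpos hode
end
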